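/- arXiv:1512.01132 — 2 statements merged into one kernel-verified Lean document; each statement's English description precedes it below -/
import Mathlib

section
/- The fixed-point potential Q(x) = ((d_c−1)/n_c − x/v)·π(d_c−1, n_c x) − ((d_c−1)/n_c)·Po[n_c x](d_c−1) satisfies Q(0) = 0, and its second derivative equals Po[n_c x](d_c−2) · [ (1 − 2/v)n_c + (1 − 1/v)(d_c−2)n_c − (1 − 1/v)n_c² x ], so Q has a unique inflection point at x' = (1/n_c)(d_c − 1 − 1/(v−1)), being convex on [0,x'] and concave thereafter (for v ≥ 2). -/
/-- The Poisson probability mass function `Po[μ](k)`. -/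
noncomputable def poissonPMF (μ : ℝ) (k : ℕ) : ℝ :=
  Real.exp (-μ) * μ ^ k / (k.factorial : ℝ)

/-- The Poisson upper tail `π(a,x) = Σ_{i ≥ a} Po[x](i)`. -/
noncomputable def poissonTail (a : ℕ) (x : ℝ) : ℝ :=
  ∑' i : ℕ, (if a ≤ i then poissonPMF x i else 0)

/-- The fixed-point potential of the spatially-coupled split-component ensemble. -/
noncomputable def fixedPointPotential (nc dc v : ℕ) (x : ℝ) : ℝ :=
  (((dc : ℝ) - 1) / nc - x / v) * poissonTail (dc - 1) ((nc : ℝ) * x)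
    - (((dc : ℝ) - 1) / nc) * poissonPMF ((nc : ℝ) * x) (dc - 1)

/-!
Write `d_c = m + 2`. Since `π(m + 1, μ) = 1 - ∑_{i ≤ m} Po[μ](i)` and the finite sum telescopes
under differentiation, `∂_μ π(m + 1, μ) = Po[μ](m)`. With the recursion
`(k + 1) Po[μ](k + 1) = μ Po[μ](k)` this collapses the first derivative to
`Q'(x) = (1 - 1/v) n_c x Po[n_c x](m) - π(m + 1, n_c x) / v`, and differentiating once more with
`∂_μ (μ Po[μ](m)) = (m + 1 - μ) Po[μ](m)` gives
`Q''(x) = (1 - 1/v) n_c² Po[n_c x](m) (x' - x)`. For `x ≥ 0` the Poisson weight is nonnegative,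
so `Q''` has the sign of `x' - x`.
-/

open Finset Real Set

lemma HasDerivAt.comp_const_mul {𝕜 : Type*} [NontriviallyNormedField 𝕜] {f : 𝕜 → 𝕜} {f' : 𝕜}
    {c x : 𝕜} (hf : HasDerivAt f f' (c * x)) : HasDerivAt (fun y => f (c * y)) (c * f') x :=
  (hf.comp x ((hasDerivAt_id' x).const_mul c)).congr_deriv (by ring)

lemma hasSum_poissonPMF (μ : ℝ) : HasSum (poissonPMF μ) 1 := by
  have h := (NormedSpace.expSeries_div_hasSum_exp μ).mul_left (exp (-μ))
  rw [← exp_eq_exp_ℝ, ← exp_add, neg_add_cancel, exp_zero] at h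
  exact h.congr_fun fun k => by simp only [poissonPMF, mul_div_assoc]

lemma poissonTail_eq_one_sub_sum (a : ℕ) (μ : ℝ) :
    poissonTail a μ = 1 - ∑ i ∈ range a, poissonPMF μ i := by
  have hhead : HasSum (fun i => if i < a then poissonPMF μ i else 0)
      (∑ i ∈ range a, poissonPMF μ i) := by
    rw [← sum_ite_of_true fun i hi => mem_range.mp hi]
    exact hasSum_sum_of_ne_finset_zero fun i hi => if_neg (by simpa using hi)
  refine (((hasSum_poissonPMF μ).sub hhead).congr_fun fun i => ?_).tsum_eq
  by_cases h : a ≤ i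
  · simp [h, not_lt.mpr h]
  · simp [h, not_le.mp h]

lemma poissonPMF_nonneg {μ : ℝ} (hμ : 0 ≤ μ) (k : ℕ) : 0 ≤ poissonPMF μ k := by
  unfold poissonPMF; positivity

lemma poissonPMF_zero_succ (k : ℕ) : poissonPMF 0 (k + 1) = 0 := by
  simp [poissonPMF]

lemma succ_mul_poissonPMF_succ (μ : ℝ) (k : ℕ) :
    (k + 1) * poissonPMF μ (k + 1) = μ * poissonPMF μ k := by
  simp only [poissonPMF, Nat.factorial_succ, Nat.cast_mul, Nat.cast_succ, pow_succ]
  field_simp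

lemma poissonTail_zero_succ (a : ℕ) : poissonTail (a + 1) 0 = 0 := by
  rw [poissonTail_eq_one_sub_sum, sum_range_succ', sum_eq_zero fun i _ => poissonPMF_zero_succ i]
  simp [poissonPMF]

lemma hasDerivAt_poissonPMF_zero (μ : ℝ) :
    HasDerivAt (poissonPMF · 0) (-poissonPMF μ 0) μ := by
  simpa [poissonPMF] using (hasDerivAt_neg μ).exp

lemma hasDerivAt_poissonPMF_succ (μ : ℝ) (k : ℕ) :
    HasDerivAt (poissonPMF · (k + 1)) (poissonPMF μ k - poissonPMF μ (k + 1)) μ := by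
  refine (((hasDerivAt_neg μ).exp.mul (hasDerivAt_pow (k + 1) μ)).div_const _).congr_deriv ?_
  simp only [poissonPMF, Nat.factorial_succ, Nat.cast_mul, Nat.cast_succ, pow_succ,
    Nat.add_sub_cancel]
  field_simp
  ring

lemma hasDerivAt_mul_poissonPMF (μ : ℝ) (k : ℕ) :
    HasDerivAt (fun μ => μ * poissonPMF μ k) ((k + 1 - μ) * poissonPMF μ k) μ := by
  cases k with
  | zero =>
    refine ((hasDerivAt_id' μ).mul (hasDerivAt_poissonPMF_zero μ)).congr_deriv ?_
    simp only [Nat.cast_zero]; ring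
  | succ k =>
    refine ((hasDerivAt_id' μ).mul (hasDerivAt_poissonPMF_succ μ k)).congr_deriv ?_
    push_cast
    linear_combination (-1 : ℝ) * succ_mul_poissonPMF_succ μ k

lemma hasDerivAt_sum_range_poissonPMF (μ : ℝ) (m : ℕ) :
    HasDerivAt (fun μ => ∑ i ∈ range (m + 1), poissonPMF μ i) (-poissonPMF μ m) μ := by
  induction m with
  | zero => simpa using hasDerivAt_poissonPMF_zero μ
  | succ m ih =>
    simp_rw [sum_range_succ _ (m + 1)]
    exact (ih.add (hasDerivAt_poissonPMF_succ μ m)).congr_deriv (by ring)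

lemma hasDerivAt_poissonTail_succ (m : ℕ) (μ : ℝ) :
    HasDerivAt (poissonTail (m + 1)) (poissonPMF μ m) μ := by
  simp_rw [funext (poissonTail_eq_one_sub_sum (m + 1))]
  simpa using (hasDerivAt_sum_range_poissonPMF μ m).const_sub 1

noncomputable def inflectionPoint (nc dc v : ℕ) : ℝ :=
  (1 / (nc : ℝ)) * ((dc : ℝ) - 1 - 1 / ((v : ℝ) - 1))

lemma one_sub_one_div_nonneg {v : ℕ} (hv : 1 ≤ v) : 0 ≤ 1 - 1 / (v : ℝ) :=
  sub_nonneg.2 (div_le_one_of_le₀ (by exact_mod_cast hv) (Nat.cast_nonneg v))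

lemma inflectionPoint_nonneg (nc : ℕ) {dc v : ℕ} (hd : 2 ≤ dc) (hv : 2 ≤ v) :
    0 ≤ inflectionPoint nc dc v := by
  have hv' : (1 : ℝ) ≤ v - 1 := by
    rw [le_sub_iff_add_le]; exact_mod_cast hv
  have hd' : (2 : ℝ) ≤ dc := by exact_mod_cast hd
  have : 1 / ((v : ℝ) - 1) ≤ 1 := div_le_one_of_le₀ hv' (by linarith)
  unfold inflectionPoint
  exact mul_nonneg (by positivity) (by linarith)

-- At `nc = 0` the junk value `1 / nc = 0` is harmless: `nc * nc * nc⁻¹ = nc` in any field.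
lemma curvature_eq_mul_sub_inflectionPoint (nc m : ℕ) {v : ℕ} (hv : 2 ≤ v) (x : ℝ) :
    (1 - 2 / (v : ℝ)) * nc + (1 - 1 / (v : ℝ)) * m * nc - (1 - 1 / (v : ℝ)) * (nc : ℝ) ^ 2 * x
      = (1 - 1 / (v : ℝ)) * (nc : ℝ) ^ 2 * (inflectionPoint nc (m + 2) v - x) := by
  have hv₀ : (v : ℝ) ≠ 0 := by positivity
  have hv₁ : (v : ℝ) - 1 ≠ 0 := by
    rw [sub_ne_zero]; exact_mod_cast (by omega : v ≠ 1)
  have hdiv : (1 - 1 / (v : ℝ)) / ((v : ℝ) - 1) = 1 / v := by field_simp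
  unfold inflectionPoint
  push_cast
  linear_combination (nc : ℝ) * hdiv
    - (1 - 1 / (v : ℝ)) * ((m : ℝ) + 1 - 1 / ((v : ℝ) - 1)) * mul_self_mul_inv (nc : ℝ)

section Potential

variable (nc m : ℕ) {v : ℕ}

lemma fixedPointPotential_add_two :
    fixedPointPotential nc (m + 2) v = fun x =>
      (((m : ℝ) + 1) / nc - x / v) * poissonTail (m + 1) (nc * x)
        - ((m : ℝ) + 1) / nc * poissonPMF (nc * x) (m + 1) := by
  ext x
  rw [fixedPointPotential, show m + 2 - 1 = m + 1 from rfl]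
  push_cast
  ring

lemma fixedPointPotential_zero : fixedPointPotential nc (m + 2) v 0 = 0 := by
  simp [fixedPointPotential_add_two, poissonTail_zero_succ, poissonPMF_zero_succ]

lemma hasDerivAt_fixedPointPotential (x : ℝ) :
    HasDerivAt (fixedPointPotential nc (m + 2) v)
      ((1 - 1 / v) * (nc * x * poissonPMF (nc * x) m) - poissonTail (m + 1) (nc * x) / v) x := by
  have hA := ((hasDerivAt_id' x).div_const (v : ℝ)).const_sub (((m : ℝ) + 1) / nc)
  have hT := (hasDerivAt_poissonTail_succ m (nc * x)).comp_const_mul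
  have hP := (hasDerivAt_poissonPMF_succ (nc * x) m).comp_const_mul.const_mul (((m : ℝ) + 1) / nc)
  rw [fixedPointPotential_add_two]
  refine ((hA.mul hT).sub hP).congr_deriv ?_
  linear_combination ((nc : ℝ)⁻¹ * nc) * succ_mul_poissonPMF_succ (nc * x) m
    + x * poissonPMF (nc * x) m * inv_mul_mul_self (nc : ℝ)

lemma deriv_fixedPointPotential :
    deriv (fixedPointPotential nc (m + 2) v) = fun x =>
      (1 - 1 / v) * (nc * x * poissonPMF (nc * x) m) - poissonTail (m + 1) (nc * x) / v :=
  funext fun x => (hasDerivAt_fixedPointPotential nc m x).deriv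

lemma hasDerivAt_deriv_fixedPointPotential (x : ℝ) :
    HasDerivAt (deriv (fixedPointPotential nc (m + 2) v))
      (poissonPMF (nc * x) m * ((1 - 2 / (v : ℝ)) * nc + (1 - 1 / (v : ℝ)) * m * nc
        - (1 - 1 / (v : ℝ)) * (nc : ℝ) ^ 2 * x)) x := by
  have hg := (hasDerivAt_mul_poissonPMF (nc * x) m).comp_const_mul.const_mul (1 - 1 / (v : ℝ))
  have hT := (hasDerivAt_poissonTail_succ m (nc * x)).comp_const_mul.div_const (v : ℝ)
  rw [deriv_fixedPointPotential]
  exact (hg.sub hT).congr_deriv (by ring)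

lemma differentiable_fixedPointPotential : Differentiable ℝ (fixedPointPotential nc (m + 2) v) :=
  fun x => (hasDerivAt_fixedPointPotential nc m x).differentiableAt

theorem convexOn_fixedPointPotential (hv : 2 ≤ v) :
    ConvexOn ℝ (Icc 0 (inflectionPoint nc (m + 2) v)) (fixedPointPotential nc (m + 2) v) := by
  refine convexOn_of_hasDerivWithinAt2_nonneg (convex_Icc _ _)
    (differentiable_fixedPointPotential nc m).continuous.continuousOn
    (fun x _ => ((differentiable_fixedPointPotential nc m) x).hasDerivAt.hasDerivWithinAt)
    (fun x _ => (hasDerivAt_deriv_fixedPointPotential nc m x).hasDerivWithinAt) ?_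
  intro x hx
  rw [interior_Icc] at hx
  obtain ⟨hx₀, hx⟩ := hx
  rw [curvature_eq_mul_sub_inflectionPoint nc m hv]
  have hP := poissonPMF_nonneg (mul_nonneg (Nat.cast_nonneg nc) hx₀.le) m
  have hv' := one_sub_one_div_nonneg (v := v) (by omega)
  exact mul_nonneg hP (mul_nonneg (by positivity) (sub_nonneg.2 hx.le))

theorem concaveOn_fixedPointPotential (hv : 2 ≤ v) :
    ConcaveOn ℝ (Ici (inflectionPoint nc (m + 2) v)) (fixedPointPotential nc (m + 2) v) := by
  refine concaveOn_of_hasDerivWithinAt2_nonpos (convex_Ici _)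
    (differentiable_fixedPointPotential nc m).continuous.continuousOn
    (fun x _ => ((differentiable_fixedPointPotential nc m) x).hasDerivAt.hasDerivWithinAt)
    (fun x _ => (hasDerivAt_deriv_fixedPointPotential nc m x).hasDerivWithinAt) ?_
  intro x hx
  rw [interior_Ici, Set.mem_Ioi] at hx
  rw [curvature_eq_mul_sub_inflectionPoint nc m hv]
  have hx₀ := (inflectionPoint_nonneg nc (by omega) hv).trans hx.le
  have hP := poissonPMF_nonneg (mul_nonneg (Nat.cast_nonneg nc) hx₀) m
  have hv' := one_sub_one_div_nonneg (v := v) (by omega)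
  exact mul_nonpos_of_nonneg_of_nonpos hP
    (mul_nonpos_of_nonneg_of_nonpos (by positivity) (sub_nonpos.2 hx.le))

end Potential

theorem fixed_point_potential_shape_general (nc dc v : ℕ) (hd : 2 ≤ dc) (hv : 2 ≤ v) :
    fixedPointPotential nc dc v 0 = 0 ∧
    (∀ x : ℝ, 0 < x →
      deriv (deriv (fixedPointPotential nc dc v)) x =
        poissonPMF ((nc : ℝ) * x) (dc - 2) *
          ((1 - 2 / (v : ℝ)) * nc + (1 - 1 / (v : ℝ)) * ((dc : ℝ) - 2) * nc
            - (1 - 1 / (v : ℝ)) * (nc : ℝ) ^ 2 * x)) ∧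
    ConvexOn ℝ (Set.Icc 0 ((1 / (nc : ℝ)) * ((dc : ℝ) - 1 - 1 / ((v : ℝ) - 1))))
      (fixedPointPotential nc dc v) ∧
    ConcaveOn ℝ (Set.Ici ((1 / (nc : ℝ)) * ((dc : ℝ) - 1 - 1 / ((v : ℝ) - 1))))
      (fixedPointPotential nc dc v) := by
  obtain ⟨m, rfl⟩ := Nat.exists_eq_add_of_le' hd
  refine ⟨fixedPointPotential_zero nc m, fun x _ => ?_,
    convexOn_fixedPointPotential nc m hv, concaveOn_fixedPointPotential nc m hv⟩
  rw [(hasDerivAt_deriv_fixedPointPotential nc m x).deriv, Nat.add_sub_cancel]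
  push_cast
  ring

/-- `Q(0)=0`; the second derivative of `Q` equals
`Po[n_c x](d_c−2)·[(1−2/v)n_c + (1−1/v)(d_c−2)n_c − (1−1/v)n_c² x]`; hence `Q` has a unique
inflection point at `x' = (1/n_c)(d_c−1−1/(v−1))`, being convex on `[0,x']` and concave
thereafter (for `v ≥ 2`). -/
theorem fixed_point_potential_shape (nc dc v : ℕ) (hd : 2 ≤ dc) (hdn : dc ≤ nc)
    (hv : 2 ≤ v) :
    fixedPointPotential nc dc v 0 = 0 ∧
    (∀ x : ℝ, 0 < x →
      deriv (deriv (fixedPointPotential nc dc v)) x =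
        poissonPMF ((nc : ℝ) * x) (dc - 2) *
          ((1 - 2 / (v : ℝ)) * nc + (1 - 1 / (v : ℝ)) * ((dc : ℝ) - 2) * nc
            - (1 - 1 / (v : ℝ)) * (nc : ℝ) ^ 2 * x)) ∧
    ConvexOn ℝ (Set.Icc 0 ((1 / (nc : ℝ)) * ((dc : ℝ) - 1 - 1 / ((v : ℝ) - 1))))
      (fixedPointPotential nc dc v) ∧
    ConcaveOn ℝ (Set.Ici ((1 / (nc : ℝ)) * ((dc : ℝ) - 1 - 1 / ((v : ℝ) - 1))))
      (fixedPointPotential nc dc v) :=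
  fixed_point_potential_shape_general nc dc v hd hv
end

section
/- Let x_0 = v(d_c−1)/n_c with x_0 bounded as d_c → ∞ (along a sequence with d_c ≤ n_c, x_0 fixed). Then Q(x_0) → 0 as d_c → ∞, where Q(x) = ((d_c−1)/n_c − x/v)π(d_c−1, n_c x) − ((d_c−1)/n_c)Po[n_c x](d_c−1); i.e., the weight-pulling point x_0 becomes a root of the fixed-point potential in the limit of large minimum distance. -/
open Filter

/-- `x^j / j! ≤ exp x` for `x ≥ 0`. -/
lemma pow_div_factorial_le_exp {x : ℝ} (hx : 0 ≤ x) (j : ℕ) :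
    x ^ j / j.factorial ≤ Real.exp x := by
  calc x ^ j / j.factorial ≤ ∑ i ∈ Finset.range (j + 1), x ^ i / i.factorial := by
        refine Finset.single_le_sum (f := fun i => x ^ i / (i.factorial : ℝ)) ?_ ?_
        · intro i _; positivity
        · simp [Finset.mem_range]
    _ ≤ Real.exp x := Real.sum_le_exp_of_nonneg hx _

/-- Chernoff-type bound: `Po[vj](j) ≤ (v e^{1−v})^j`. -/
lemma pmf_diag_le (v : ℕ) (j : ℕ) :
    poissonPMF ((v : ℝ) * j) j ≤ ((v : ℝ) * Real.exp (1 - v)) ^ j := by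
  have hj : (0:ℝ) ≤ j := j.cast_nonneg
  have hv : (0:ℝ) ≤ v := v.cast_nonneg
  have h1 : (j:ℝ) ^ j / j.factorial ≤ Real.exp j := pow_div_factorial_le_exp hj j
  have hfac : (0:ℝ) < j.factorial := by exact_mod_cast j.factorial_pos
  unfold poissonPMF
  have : ((v:ℝ) * j) ^ j = (v:ℝ) ^ j * (j:ℝ) ^ j := mul_pow _ _ _
  rw [this]
  calc Real.exp (-((v:ℝ) * j)) * ((v:ℝ) ^ j * (j:ℝ) ^ j) / j.factorial
      = Real.exp (-((v:ℝ) * j)) * (v:ℝ) ^ j * ((j:ℝ) ^ j / j.factorial) := by ring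
    _ ≤ Real.exp (-((v:ℝ) * j)) * (v:ℝ) ^ j * Real.exp j := by
        apply mul_le_mul_of_nonneg_left h1
        positivity
    _ = ((v : ℝ) * Real.exp (1 - v)) ^ j := by
        rw [mul_pow, ← Real.exp_nat_mul, mul_right_comm, ← Real.exp_add]
        rw [show -((v:ℝ)*j) + j = (j:ℝ)*(1-v) by ring]
        ring

/-- `Po[vj](j) → 0` as `j → ∞`, for `v ≥ 2`. -/
lemma pmf_diag_tendsto (v : ℕ) (hv : 2 ≤ v) :
    Tendsto (fun j : ℕ => poissonPMF ((v : ℝ) * j) j) atTop (nhds 0) := by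
  have hr0 : (0:ℝ) ≤ (v : ℝ) * Real.exp (1 - v) := by positivity
  have hr1 : (v : ℝ) * Real.exp (1 - v) < 1 := by
    have hvne : ((v:ℝ) - 1) ≠ 0 := by
      have : (2:ℝ) ≤ v := by exact_mod_cast hv
      intro h; linarith
    have := Real.add_one_lt_exp hvne
    have hlt : (v:ℝ) < Real.exp ((v:ℝ) - 1) := by linarith
    have hepos : (0:ℝ) < Real.exp ((v:ℝ) - 1) := Real.exp_pos _
    rw [show (1:ℝ) - (v:ℝ) = -((v:ℝ) - 1) by ring, Real.exp_neg]
    rw [mul_inv_lt_iff₀ hepos]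
    linarith
  have hgeo : Tendsto (fun j : ℕ => ((v : ℝ) * Real.exp (1 - v)) ^ j) atTop (nhds 0) :=
    tendsto_pow_atTop_nhds_zero_of_lt_one hr0 hr1
  refine squeeze_zero (fun j => ?_) (fun j => pmf_diag_le v j) hgeo
  unfold poissonPMF
  positivity

/-- along a sequence of component codes with `d_c → ∞`, `d_c ≤ n_c`, and
`(d_c−1)/n_c = x_0/v` held fixed, the weight-pulling point `x_0 = v(d_c−1)/n_c` becomes a
root of the fixed-point potential: `Q(x_0) → 0`. -/
theorem weight_pulling_point_root_in_limit (v : ℕ) (hv : 2 ≤ v) (x0 : ℝ) (hx0 : 0 < x0)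
    (d n : ℕ → ℕ) (hd2 : ∀ k, 2 ≤ d k) (hdn : ∀ k, d k ≤ n k)
    (hratio : ∀ k, ((d k : ℝ) - 1) / (n k) = x0 / v)
    (hdtop : Tendsto d atTop atTop) :
    Tendsto (fun k => fixedPointPotential (n k) (d k) v x0) atTop (nhds 0) := by
  have hvpos : (0:ℝ) < v := by exact_mod_cast lt_of_lt_of_le two_pos hv
  have hnpos : ∀ k, (0:ℝ) < n k := fun k => by
    exact_mod_cast lt_of_lt_of_le two_pos ((hd2 k).trans (hdn k))
  have hcast : ∀ k, ((d k - 1 : ℕ) : ℝ) = (d k : ℝ) - 1 := fun k => by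
    have := hd2 k; push_cast [Nat.cast_sub (by omega : 1 ≤ d k)]; ring
  have hmu : ∀ k, (n k : ℝ) * x0 = (v : ℝ) * ((d k - 1 : ℕ) : ℝ) := by
    intro k
    have h := hratio k
    rw [div_eq_div_iff (hnpos k).ne' hvpos.ne'] at h
    rw [hcast k]; linarith
  have hQ : ∀ k, fixedPointPotential (n k) (d k) v x0
      = -(x0 / v) * poissonPMF ((v : ℝ) * ((d k - 1 : ℕ) : ℝ)) (d k - 1) := by
    intro k
    unfold fixedPointPotential
    rw [hratio k, hmu k]
    ring
  simp only [hQ]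
  have hm : Tendsto (fun k => d k - 1) atTop atTop := by
    apply tendsto_atTop_atTop.2
    intro b
    obtain ⟨N, hN⟩ := (tendsto_atTop_atTop.1 hdtop) (b + 1)
    exact ⟨N, fun k hk => by have := hN k hk; omega⟩
  have := ((pmf_diag_tendsto v hv).comp hm).const_mul (-(x0 / v))
  simpa using this
end
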